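/- arXiv:1605.03382 — 4 statements merged into one kernel-verified Lean document; each statement's English description precedes it below -/
import Mathlib

section
/- Let V be a finite-dimensional real vector space, G a group, and ρ : G → GL(V) a linear representation. Let h ⊆ V be a ρ-invariant linear subspace and set N = {ξ ∈ V : ρ(g)ξ − ξ ∈ h for all g ∈ G} (a linear subspace of V containing h). If α and β are two G-invariant inner products on V, and P_α, P_β denote the orthogonal complements of N in V with respect to α and β respectively, then P_α + h = P_β + h; moreover P_α ∩ h = 0 and P_β ∩ h = 0, so both sums are direct. (This is the linear-algebraic content of Lemma 8 of the paper: for the adjoint representation of a compact connected subgroup H⁰ of a Lie group G on its Lie algebra g, the subspace N is the normalizer n(h) of the Lie algebra h of H⁰, and the conclusion reads p^α ⊕ h = p^β ⊕ h.) -/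
/-!
Both `Pα ⊔ h` and `Pβ ⊔ h` equal `D ⊔ h`, where `D = Coinvariants.ker ρ` is the span of the
vectors `ρ g v - v`, which does not depend on any form. For an invariant inner product `γ`, `D` is
the `γ`-orthogonal of the fixed vectors; these lie in `N`, so `Pγ = N^⊥ ≤ D`. Conversely, writing
`v = n + p` with `n ∈ N` and `p ∈ Pγ`, we get `ρ g v - v = (ρ g n - n) + (ρ g p - p) ∈ h + Pγ`,
since `Pγ` is invariant.
-/

open LinearMap (BilinForm)

namespace LinearMap.BilinForm

variable {K V : Type*} [Field K] [AddCommGroup V] [Module K V] [FiniteDimensional K V]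
  {B : BilinForm K V}

theorem isCompl_orthogonal_of_anisotropic (hB₀ : B.IsRefl) (hB : B.toQuadraticMap.Anisotropic)
    (W : Submodule K V) : IsCompl W (B.orthogonal W) :=
  (isCompl_orthogonal_iff_disjoint hB₀).2 <|
    Submodule.disjoint_def.2 fun x hxW hxW' => hB x (hxW' x hxW)

end LinearMap.BilinForm

namespace Representation

open LinearMap.BilinForm

variable {K G V : Type*} [Field K] [Group G] [AddCommGroup V] [Module K V]
  (ρ : Representation K G V) {B : BilinForm K V}

theorem apply_mem_orthogonal (hB : ∀ g u v, B (ρ g u) (ρ g v) = B u v) {W : Submodule K V}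
    (hW : ∀ g, ∀ w ∈ W, ρ g w ∈ W) (g : G) {v : V} (hv : v ∈ B.orthogonal W) :
    ρ g v ∈ B.orthogonal W := by
  intro w hw
  rw [← ρ.self_inv_apply g w, hB]
  exact hv _ (hW g⁻¹ w hw)

theorem orthogonal_coinvariantsKer (hB : ∀ g u v, B (ρ g u) (ρ g v) = B u v)
    (hBr : LinearMap.SeparatingRight B) :
    B.orthogonal (Coinvariants.ker ρ) = ρ.invariants := by
  ext v
  constructor
  · intro hv g
    have hB_sub : ∀ x, B x (ρ g v - v) = 0 := fun x => by
      have := hv _ (Coinvariants.sub_mem_ker g⁻¹ x)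
      rwa [map_sub, LinearMap.sub_apply, ← hB g, ρ.self_inv_apply, ← map_sub] at this
    exact sub_eq_zero.1 (hBr _ hB_sub)
  · intro hv
    have hker : Coinvariants.ker ρ ≤ LinearMap.ker (B.flip v) :=
      Submodule.span_le.2 <| by
        rintro _ ⟨⟨g, x⟩, rfl⟩
        simp [← hB g x v, (ρ.mem_invariants v).1 hv g]
    exact fun x hx => hker hx

theorem orthogonal_invariants [FiniteDimensional K V] (hB : ∀ g u v, B (ρ g u) (ρ g v) = B u v)
    (hB₀ : B.IsRefl) (hBnd : B.Nondegenerate) :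
    B.orthogonal ρ.invariants = Coinvariants.ker ρ := by
  rw [← ρ.orthogonal_coinvariantsKer hB hBnd.2, orthogonal_orthogonal hBnd hB₀]

section RelativeInvariants

variable {ρ} {h N : Submodule K V}

theorem invariants_le_of_forall_sub_mem (hN : ∀ ξ, ξ ∈ N ↔ ∀ g, ρ g ξ - ξ ∈ h) :
    ρ.invariants ≤ N := fun ξ hξ =>
  (hN ξ).2 fun g => by rw [(ρ.mem_invariants ξ).1 hξ g, sub_self]; exact h.zero_mem

theorem le_of_forall_sub_mem (hN : ∀ ξ, ξ ∈ N ↔ ∀ g, ρ g ξ - ξ ∈ h)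
    (hh : ∀ g, ∀ x ∈ h, ρ g x ∈ h) : h ≤ N := fun x hx =>
  (hN x).2 fun g => sub_mem (hh g x hx) hx

theorem apply_mem_of_forall_sub_mem (hN : ∀ ξ, ξ ∈ N ↔ ∀ g, ρ g ξ - ξ ∈ h) (g : G) {ξ : V}
    (hξ : ξ ∈ N) : ρ g ξ ∈ N := by
  refine (hN _).2 fun g' => ?_
  have : ρ g' (ρ g ξ) - ρ g ξ = (ρ (g' * g) ξ - ξ) - (ρ g ξ - ξ) := by
    rw [map_mul, Module.End.mul_apply]; abel
  rw [this]
  exact sub_mem ((hN ξ).1 hξ _) ((hN ξ).1 hξ _)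

theorem orthogonal_sup_eq_coinvariantsKer_sup [FiniteDimensional K V]
    (hN : ∀ ξ, ξ ∈ N ↔ ∀ g, ρ g ξ - ξ ∈ h)
    (hB : ∀ g u v, B (ρ g u) (ρ g v) = B u v) (hB₀ : B.IsRefl)
    (hBa : B.toQuadraticMap.Anisotropic) :
    B.orthogonal N ⊔ h = Coinvariants.ker ρ ⊔ h := by
  have hBnd : B.Nondegenerate :=
    hB₀.nondegenerate_iff_separatingLeft.2 (separatingLeft_of_anisotropic hBa)
  refine le_antisymm (sup_le_sup_right ?_ h) (sup_le ?_ le_sup_right)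
  · rw [← ρ.orthogonal_invariants hB hB₀ hBnd]
    exact orthogonal_le (invariants_le_of_forall_sub_mem hN)
  · refine Submodule.span_le.2 ?_
    rintro _ ⟨⟨g, v⟩, rfl⟩
    obtain ⟨n, hn, p, hp, rfl⟩ :=
      Submodule.mem_sup.1 ((isCompl_orthogonal_of_anisotropic hB₀ hBa N).sup_eq_top ▸
        Submodule.mem_top (x := v))
    have hp' : ρ g p - p ∈ B.orthogonal N :=
      sub_mem (ρ.apply_mem_orthogonal hB (fun g _ => apply_mem_of_forall_sub_mem hN g) g hp) hp
    have hn' : ρ g n - n ∈ h := (hN n).1 hn g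
    have : ρ g (n + p) - (n + p) = (ρ g p - p) + (ρ g n - n) := by rw [map_add]; abel
    change ρ g (n + p) - (n + p) ∈ B.orthogonal N ⊔ h
    exact this ▸ Submodule.add_mem_sup hp' hn'

end RelativeInvariants

end Representation

/-- Linear-algebraic content of Lemma 8: if `h` is an invariant subspace,
`N = {ξ | ρ(g)ξ - ξ ∈ h for all g}`, and `Pα`, `Pβ` are the orthogonal complements
of `N` with respect to two `G`-invariant inner products, then
`Pα + h = Pβ + h` and both sums are direct. -/
theorem stmt_0 {V : Type*} [AddCommGroup V] [Module ℝ V] [FiniteDimensional ℝ V]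
    {G : Type*} [Group G] (ρ : G →* (V ≃ₗ[ℝ] V))
    (h : Submodule ℝ V) (hinv : ∀ (g : G), ∀ x ∈ h, ρ g x ∈ h)
    (N : Submodule ℝ V) (hN : ∀ ξ : V, ξ ∈ N ↔ ∀ g : G, ρ g ξ - ξ ∈ h)
    (α β : V →ₗ[ℝ] V →ₗ[ℝ] ℝ)
    (hαsymm : ∀ u v : V, α u v = α v u) (hαpos : ∀ v : V, v ≠ 0 → 0 < α v v)
    (hβsymm : ∀ u v : V, β u v = β v u) (hβpos : ∀ v : V, v ≠ 0 → 0 < β v v)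
    (hαG : ∀ (g : G) (u v : V), α (ρ g u) (ρ g v) = α u v)
    (hβG : ∀ (g : G) (u v : V), β (ρ g u) (ρ g v) = β u v)
    (Pα Pβ : Submodule ℝ V)
    (hPα : ∀ v : V, v ∈ Pα ↔ ∀ n ∈ N, α v n = 0)
    (hPβ : ∀ v : V, v ∈ Pβ ↔ ∀ n ∈ N, β v n = 0) :
    Pα ⊔ h = Pβ ⊔ h ∧ Pα ⊓ h = ⊥ ∧ Pβ ⊓ h = ⊥ := by
  let σ : Representation ℝ G V := LinearEquiv.automorphismGroup.toLinearMapMonoidHom.comp ρ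
  have hhN : h ≤ N := Representation.le_of_forall_sub_mem (ρ := σ) hN hinv
  have key : ∀ (γ : BilinForm ℝ V) (P : Submodule ℝ V), (∀ u v, γ u v = γ v u) →
      (∀ v, v ≠ 0 → 0 < γ v v) → (∀ g u v, γ (ρ g u) (ρ g v) = γ u v) →
      (∀ v, v ∈ P ↔ ∀ n ∈ N, γ v n = 0) →
      P ⊔ h = Representation.Coinvariants.ker σ ⊔ h ∧ P ⊓ h = ⊥ := by
    intro γ P hsymm hpos hG hP
    have hγ₀ : γ.IsRefl := fun u v huv => by rwa [hsymm]
    have hγa : γ.toQuadraticMap.Anisotropic := fun v hv => by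
      by_contra hne
      exact (hpos v hne).ne' hv
    obtain rfl : P = γ.orthogonal N := by
      ext v
      simp only [hP, LinearMap.BilinForm.mem_orthogonal_iff, hsymm v]
    have hcompl := LinearMap.BilinForm.isCompl_orthogonal_of_anisotropic hγ₀ hγa N
    exact ⟨Representation.orthogonal_sup_eq_coinvariantsKer_sup hN hG hγ₀ hγa,
      (hcompl.disjoint.symm.mono_right hhN).eq_bot⟩
  obtain ⟨hα_sup, hα_inf⟩ := key α Pα hαsymm hαpos hαG hPα
  obtain ⟨hβ_sup, hβ_inf⟩ := key β Pβ hβsymm hβpos hβG hPβ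
  exact ⟨hα_sup.trans hβ_sup.symm, hα_inf, hβ_inf⟩
end

section
/- Let V be a finite-dimensional real vector space, G a group, and ρ : G → GL(V) a linear representation. Let W = {v ∈ V : ρ(g)v = v for all g ∈ G} be the subspace of G-fixed vectors. If α and β are two G-invariant inner products on V, then the orthogonal complement of W with respect to α equals the orthogonal complement of W with respect to β. -/
/-!
Let `W` be the fixed vectors and `U` the span of the vectors `ρ g v - v`. For any invariant
nondegenerate form `B` one has `U^⊥ = W`: a vector `u` is orthogonal to all `ρ g v - v` iff
`B v (ρ g u - u) = 0` for all `v`, i.e. iff `u` is fixed. In finite dimension `B`-orthogonality is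
an involution on subspaces, so `W^⊥ = U` for every invariant inner product; and `U` does not depend
on `B`.
-/

theorem LinearMap.BilinForm.nondegenerate_of_symm_of_pos {R V : Type*} [CommRing R]
    [PartialOrder R] [AddCommGroup V] [Module R V] {B : LinearMap.BilinForm R V}
    (hsymm : ∀ u v : V, B u v = B v u) (hpos : ∀ v : V, v ≠ 0 → 0 < B v v) :
    B.Nondegenerate :=
  (LinearMap.IsRefl.nondegenerate_iff_separatingLeft fun u v h => by rwa [hsymm]).mpr
    fun v hv => by_contra fun hne => (hpos v hne).ne' (hv v)

namespace Representation

section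

variable {k G V : Type*} [CommRing k] [Group G] [AddCommGroup V] [Module k V]
  {ρ : Representation k G V} {B : LinearMap.BilinForm k V}

theorem apply_sub_self_apply_eq_zero_of_mem_invariants
    (hB : ∀ (g : G) (u v : V), B (ρ g u) (ρ g v) = B u v) (g : G) (v : V) {w : V}
    (hw : w ∈ ρ.invariants) : B (ρ g v - v) w = 0 := by
  rw [map_sub, LinearMap.sub_apply, ← hB g v w, hw g, sub_self]

theorem orthogonal_coinvariantsKer_eq_invariants
    (hB : ∀ (g : G) (u v : V), B (ρ g u) (ρ g v) = B u v) (hsep : B.SeparatingRight) :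
    B.orthogonal (Coinvariants.ker ρ) = ρ.invariants := by
  ext u
  rw [LinearMap.BilinForm.mem_orthogonal_iff]
  constructor
  · intro hu g
    refine sub_eq_zero.mp (hsep _ fun v => ?_)
    -- `B v (ρ g u) = B (ρ g⁻¹ v) u` by invariance, and `ρ g (ρ g⁻¹ v) - ρ g⁻¹ v ⊥ u`.
    have hortho := hu _ (Coinvariants.sub_mem_ker g (ρ g⁻¹ v))
    rw [self_inv_apply, map_sub, LinearMap.sub_apply] at hortho
    rw [map_sub, ← hB g⁻¹ v (ρ g u), inv_self_apply]
    linear_combination -hortho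
  · intro hu n hn
    induction hn using Submodule.span_induction with
    | mem x hx =>
      obtain ⟨⟨g, v⟩, rfl⟩ := hx
      exact apply_sub_self_apply_eq_zero_of_mem_invariants hB g v hu
    | zero => simp
    | add x y _ _ hx hy => simp [hx, hy]
    | smul c x _ hx => simp [hx]

end

section

variable {K G V : Type*} [Field K] [Group G] [AddCommGroup V] [Module K V] [FiniteDimensional K V]
  {ρ : Representation K G V} {B : LinearMap.BilinForm K V}

theorem orthogonal_invariants_eq_coinvariantsKer
    (hB : ∀ (g : G) (u v : V), B (ρ g u) (ρ g v) = B u v) (hnd : B.Nondegenerate)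
    (hrefl : B.IsRefl) :
    B.orthogonal ρ.invariants = Coinvariants.ker ρ := by
  rw [← orthogonal_coinvariantsKer_eq_invariants hB hnd.2,
    LinearMap.BilinForm.orthogonal_orthogonal hnd hrefl]

theorem setOf_forall_apply_eq_zero_eq_coinvariantsKer [PartialOrder K]
    (hsymm : ∀ u v : V, B u v = B v u) (hpos : ∀ v : V, v ≠ 0 → 0 < B v v)
    (hB : ∀ (g : G) (u v : V), B (ρ g u) (ρ g v) = B u v) :
    {v : V | ∀ w ∈ ρ.invariants, B v w = 0} = Coinvariants.ker ρ := by
  rw [← orthogonal_invariants_eq_coinvariantsKer hB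
    (LinearMap.BilinForm.nondegenerate_of_symm_of_pos hsymm hpos) fun u v h => by rwa [hsymm]]
  ext v
  simp only [Set.mem_ofPred_eq, SetLike.mem_coe, LinearMap.BilinForm.mem_orthogonal_iff, hsymm v]

end

end Representation

/-- If `W` is the subspace of `G`-fixed vectors of a representation, then the
orthogonal complements of `W` with respect to any two `G`-invariant inner
products coincide. -/
theorem stmt_1 {V : Type*} [AddCommGroup V] [Module ℝ V] [FiniteDimensional ℝ V]
    {G : Type*} [Group G] (ρ : G →* (V ≃ₗ[ℝ] V))
    (W : Submodule ℝ V) (hW : ∀ v : V, v ∈ W ↔ ∀ g : G, ρ g v = v)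
    (α β : V →ₗ[ℝ] V →ₗ[ℝ] ℝ)
    (hαsymm : ∀ u v : V, α u v = α v u) (hαpos : ∀ v : V, v ≠ 0 → 0 < α v v)
    (hβsymm : ∀ u v : V, β u v = β v u) (hβpos : ∀ v : V, v ≠ 0 → 0 < β v v)
    (hαG : ∀ (g : G) (u v : V), α (ρ g u) (ρ g v) = α u v)
    (hβG : ∀ (g : G) (u v : V), β (ρ g u) (ρ g v) = β u v) :
    {v : V | ∀ w ∈ W, α v w = 0} = {v : V | ∀ w ∈ W, β v w = 0} := by
  let σ : Representation ℝ G V := LinearEquiv.automorphismGroup.toLinearMapMonoidHom.comp ρ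
  obtain rfl : W = σ.invariants := SetLike.ext hW
  rw [σ.setOf_forall_apply_eq_zero_eq_coinvariantsKer hαsymm hαpos hαG,
    σ.setOf_forall_apply_eq_zero_eq_coinvariantsKer hβsymm hβpos hβG]
end

section
/- Let g be a finite-dimensional real Lie algebra equipped with an inner product ⟨·,·⟩ that is invariant, i.e., ⟨[x,y],z⟩ + ⟨y,[x,z]⟩ = 0 for all x,y,z ∈ g. Then for every Lie subalgebra h ⊆ g, the normalizer n(h) = {x ∈ g : [x,y] ∈ h for all y ∈ h} satisfies n(h) = z_g(h) + h, where z_g(h) = {x ∈ g : [x,y] = 0 for all y ∈ h} is the centralizer of h in g. (This identity is used in the proof of Proposition 6 of the paper, where it is phrased as n(h) = ĝ + h for the compact Lie algebra g, with ĝ the centralizer of h.) -/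
/-!
Split `x = z + w` along `g = h ⊕ h^⊥`, which holds because the form is positive definite. The
component `z = x - w` still normalizes `h`, and invariance gives `⟪[z, y], u⟫ = ⟪z, [y, u]⟫ = 0`
for `y, u ∈ h`, so `[z, y] ∈ h ∩ h^⊥ = 0`.
-/

namespace LinearMap.BilinForm

theorem disjoint_orthogonal_of_anisotropic {R M : Type*} [CommRing R] [AddCommGroup M]
    [Module R M] {B : LinearMap.BilinForm R M} (hB : ∀ x, B x x = 0 → x = 0) (W : Submodule R M) :
    Disjoint W (B.orthogonal W) :=
  Submodule.disjoint_def.mpr fun x hxW hxW' => hB x (hxW' x hxW)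

section LieInvariant

variable {R L : Type*} [CommRing R] [LieRing L] [LieAlgebra R L] {B : LinearMap.BilinForm R L}
  {H : LieSubalgebra R L}

theorem lie_mem_orthogonal (hB : B.lieInvariant L) {z y : L}
    (hz : z ∈ B.orthogonal H.toSubmodule) (hy : y ∈ H) :
    ⁅z, y⁆ ∈ B.orthogonal H.toSubmodule := by
  intro u hu
  calc B u ⁅z, y⁆ = -B u ⁅y, z⁆ := by rw [← lie_skew, map_neg]
    _ = B ⁅y, u⁆ z := (hB y u z).symm
    _ = 0 := hz _ (H.lie_mem hy hu)

theorem lie_eq_zero_of_mem_orthogonal (hB : B.lieInvariant L)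
    (hH : Disjoint H.toSubmodule (B.orthogonal H.toSubmodule)) {z : L}
    (hz : z ∈ B.orthogonal H.toSubmodule) (hzH : ∀ y ∈ H, ⁅z, y⁆ ∈ H) :
    ∀ y ∈ H, ⁅z, y⁆ = 0 := fun y hy =>
  Submodule.disjoint_def.mp hH _ (hzH y hy) (lie_mem_orthogonal hB hz hy)

theorem exists_centralizing_add_mem_of_isCompl (hB : B.lieInvariant L)
    (hH : IsCompl H.toSubmodule (B.orthogonal H.toSubmodule)) {x : L}
    (hx : ∀ y ∈ H, ⁅x, y⁆ ∈ H) :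
    ∃ z w : L, (∀ y ∈ H, ⁅z, y⁆ = 0) ∧ w ∈ H ∧ x = z + w := by
  obtain ⟨w, hw, z, hz, rfl⟩ := Submodule.mem_sup.mp (hH.sup_eq_top ▸ Submodule.mem_top (x := x))
  have hzH : ∀ y ∈ H, ⁅z, y⁆ ∈ H := fun y hy => by
    simpa [add_lie] using H.sub_mem (hx y hy) (H.lie_mem hw hy)
  exact ⟨z, w, lie_eq_zero_of_mem_orthogonal hB hH.disjoint hz hzH, hw, add_comm w z⟩

end LieInvariant

end LinearMap.BilinForm

open LinearMap.BilinForm in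
/-- For a real Lie algebra with an invariant inner product, the normalizer of a
Lie subalgebra `h` equals the centralizer of `h` plus `h`. -/
theorem stmt_6 {g : Type*} [LieRing g] [LieAlgebra ℝ g] [Module.Finite ℝ g]
    (B : g →ₗ[ℝ] g →ₗ[ℝ] ℝ)
    (hsymm : ∀ x y : g, B x y = B y x) (hpos : ∀ x : g, x ≠ 0 → 0 < B x x)
    (hinv : ∀ x y z : g, B ⁅x, y⁆ z = - B y ⁅x, z⁆)
    (h : LieSubalgebra ℝ g) :
    ∀ x : g, (∀ y ∈ h, ⁅x, y⁆ ∈ h) ↔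
      ∃ z w : g, (∀ y ∈ h, ⁅z, y⁆ = 0) ∧ w ∈ h ∧ x = z + w := by
  have hrefl : B.IsRefl := fun x y hxy => (hsymm y x).trans hxy
  have hanis : ∀ x, B x x = 0 → x = 0 := fun x hx =>
    by_contra fun hx0 => (hpos x hx0).ne' hx
  have hcompl : IsCompl h.toSubmodule (LinearMap.BilinForm.orthogonal B h.toSubmodule) :=
    (isCompl_orthogonal_iff_disjoint hrefl).mpr (disjoint_orthogonal_of_anisotropic hanis _)
  intro x
  refine ⟨exists_centralizing_add_mem_of_isCompl hinv hcompl, ?_⟩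
  rintro ⟨z, w, hz, hw, rfl⟩ y hy
  rw [add_lie, hz y hy, zero_add]
  exact h.lie_mem hw hy
end

section
/- Let G be a topological group and H ⊆ G a compact subgroup having only finitely many connected components. Let g ∈ G be an element such that g H g⁻¹ ⊆ H and such that g H g⁻¹ is an open subset of H in the subspace topology of H. Then g H g⁻¹ = H. (This fact is used in the proof of Proposition 6 of the paper: conjugation by g is a homeomorphism of H onto the open subgroup g H g⁻¹, so both have the same finite number of connected components, each being a coset of the identity component H⁰, which forces equality.) -/
/-!
Conjugation by `g` restricts to a topological embedding `φ : H → H` whose range `g H g⁻¹` is an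
open, hence clopen, subgroup. A clopen range contains every component it meets, and `φ` maps
components into components injectively; with finitely many components this forces every component,
hence all of `H`, to lie in the range.
-/

open Set Function Topology

section ConnectedComponents

variable {X Y : Type*} [TopologicalSpace X] [TopologicalSpace Y]

theorem Topology.IsInducing.mem_connectedComponent_of_apply_mem {f : X → Y} (hf : IsInducing f)
    (hclopen : IsClopen (range f)) {x y : X} (h : f y ∈ connectedComponent (f x)) :
    y ∈ connectedComponent x := by
  have hsub : connectedComponent (f x) ⊆ range f :=
    hclopen.connectedComponent_subset (mem_range_self x)
  have hpre : IsPreconnected (f ⁻¹' connectedComponent (f x)) := by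
    rw [← hf.isPreconnected_image, image_preimage_eq_of_subset hsub]
    exact isPreconnected_connectedComponent
  exact hpre.subset_connectedComponent mem_connectedComponent h

theorem Topology.IsInducing.connectedComponentsMap_injective {f : X → Y} (hf : IsInducing f)
    (hclopen : IsClopen (range f)) : Injective hf.continuous.connectedComponentsMap := by
  refine ConnectedComponents.surjective_coe.forall₂.2 fun x y h => ?_
  rw [Continuous.connectedComponentsMap_mk, Continuous.connectedComponentsMap_mk,
    ConnectedComponents.coe_eq_coe'] at h
  exact ConnectedComponents.coe_eq_coe'.2 (hf.mem_connectedComponent_of_apply_mem hclopen h)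

theorem Topology.IsInducing.surjective_of_isClopen_range [Finite (ConnectedComponents X)]
    {f : X → X} (hf : IsInducing f) (hclopen : IsClopen (range f)) : Surjective f := by
  intro z
  obtain ⟨c, hc⟩ := Finite.surjective_of_injective
    (hf.connectedComponentsMap_injective hclopen) (.mk z)
  obtain ⟨x, rfl⟩ := ConnectedComponents.surjective_coe c
  rw [Continuous.connectedComponentsMap_mk, ConnectedComponents.coe_eq_coe] at hc
  exact hclopen.connectedComponent_subset (mem_range_self x) (hc ▸ mem_connectedComponent)

end ConnectedComponents

theorem stmt_7_general {G : Type*} [Group G] [TopologicalSpace G] [IsTopologicalGroup G]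
    (H : Subgroup G)
    (hfin : Finite (ConnectedComponents H))
    (g : G)
    (hsub : (fun x => g * x * g⁻¹) '' (H : Set G) ⊆ (H : Set G))
    (hopen : IsOpen {x : H | (x : G) ∈ (fun x => g * x * g⁻¹) '' (H : Set G)}) :
    (fun x => g * x * g⁻¹) '' (H : Set G) = (H : Set G) := by
  let φ : H →* H := ((MulAut.conj g).toMonoidHom.comp H.subtype).codRestrict H
    fun x => hsub ⟨x, x.2, rfl⟩
  have hφ : IsInducing φ :=
    (((Homeomorph.mulLeft g).trans (Homeomorph.mulRight g⁻¹)).isInducing.comp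
      .subtypeVal).codRestrict _
  have hrange :
      (φ.range : Set H) = {x : H | (x : G) ∈ (fun x => g * x * g⁻¹) '' (H : Set G)} := by
    ext y
    simp [φ, Subtype.ext_iff]
  have hrange_open : IsOpen (φ.range : Set H) := hrange ▸ hopen
  have hclopen : IsClopen (range φ) :=
    φ.coe_range ▸ ⟨φ.range.isClosed_of_isOpen hrange_open, hrange_open⟩
  refine hsub.antisymm fun z hz => ?_
  obtain ⟨x, hx⟩ := hφ.surjective_of_isClopen_range hclopen ⟨z, hz⟩
  exact ⟨x, x.2, congrArg Subtype.val hx⟩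

/-- If `H` is a compact subgroup of a topological group with finitely many
connected components and `g H g⁻¹` is an open subgroup of `H`, then
`g H g⁻¹ = H`. -/
theorem stmt_7 {G : Type*} [Group G] [TopologicalSpace G] [IsTopologicalGroup G]
    (H : Subgroup G) (hcomp : IsCompact (H : Set G))
    (hfin : Finite (ConnectedComponents H))
    (g : G)
    (hsub : (fun x => g * x * g⁻¹) '' (H : Set G) ⊆ (H : Set G))
    (hopen : IsOpen {x : H | (x : G) ∈ (fun x => g * x * g⁻¹) '' (H : Set G)}) :
    (fun x => g * x * g⁻¹) '' (H : Set G) = (H : Set G) :=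
  stmt_7_general H hfin g hsub hopen
end
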